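/- arXiv:2207.02096 — 2 statements merged into one kernel-verified Lean document; each statement's English description precedes it below -/
import Mathlib

section
/- Let μ and ν be Borel probability measures on ℝ^d with finite second moment. Suppose that for every Borel probability measure ρ on ℝ^d with finite second moment one has W₂²(ν,ρ) − W₂²(μ,ρ) ≤ ∫ |x|² ν(dx) − ∫ |x|² μ(dx). Then μ ≤_c ν, i.e. ∫ f dμ ≤ ∫ f dν for every convex function f : ℝ^d → ℝ integrable with respect to both μ and ν. -/
/-
A convex `f` is the increasing limit of maxima `F = max_{n ≤ N} (⟪a n, x⟫ + c (a n))` of affine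
minorants (subgradients at a dense sequence), so by monotone convergence it suffices to treat such
`F`. Choose measurably a maximising slope `g x`, so that `F x = ⟪g x, x⟫ + c (g x)`, and test the
hypothesis with `ρ = g_# μ`. The coupling `(id, g)_# μ` gives
`W₂²(μ, ρ) ≤ ∫ ‖x - g x‖² dμ`, while the Young inequality `⟪x, y⟫ ≤ F x - c y` (for `y` in the
range of `g`) bounds every coupling of `ν` and `ρ` from below:
`W₂²(ν, ρ) ≥ ∫ ‖x‖² dν + ∫ ‖y‖² dρ - 2 ∫ F dν + 2 ∫ c dρ`. After expanding the squares, the second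
moments cancel against the hypothesis and leave `∫ F dμ ≤ ∫ F dν`.
-/

open MeasureTheory

/-- The squared 2-Wasserstein distance between two measures on `ℝ^d`:
the infimum of `∫ ‖x - y‖²` over all couplings. -/
noncomputable def W2sq {d : ℕ}
    (μ ν : Measure (EuclideanSpace ℝ (Fin d))) : ℝ :=
  sInf { r : ℝ | ∃ π : Measure (EuclideanSpace ℝ (Fin d) × EuclideanSpace ℝ (Fin d)),
    π.map Prod.fst = μ ∧ π.map Prod.snd = ν ∧ r = ∫ p, ‖p.1 - p.2‖ ^ 2 ∂π }

open Set Filter Topology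
open scoped RealInnerProductSpace

section ConvexAnalysis

variable {E : Type*} [NormedAddCommGroup E]

theorem ConvexOn.exists_subgradient [NormedSpace ℝ E] {f : E → ℝ} (hf : ConvexOn ℝ univ f)
    (hcont : Continuous f) (x : E) : ∃ φ : E →L[ℝ] ℝ, ∀ y, f x + φ (y - x) ≤ f y := by
  have hconv : Convex ℝ {p : E × ℝ | f p.1 < p.2} := by
    simpa only [mem_univ, true_and] using hf.convex_strict_epigraph
  obtain ⟨ℓ, hℓ⟩ := geometric_hahn_banach_open_point hconv
    (isOpen_lt (hcont.comp continuous_fst) continuous_snd) (x := (x, f x)) (lt_irrefl (f x))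
  have hℓ_apply : ∀ y t, ℓ (y, t) = ℓ (y, 0) + t * ℓ (0, 1) := fun y t => by
    have : (y, t) = (y, 0) + t • ((0 : E), (1 : ℝ)) := by simp
    rw [this, map_add, map_smul, smul_eq_mul]
  have hc : ℓ (0, 1) < 0 := by
    have := hℓ (x, f x + 1) (lt_add_one (f x))
    rw [hℓ_apply, hℓ_apply x (f x)] at this
    linarith
  -- the closed epigraph lies in the half-space as well, by letting `t ↓ f y`
  have hle : ∀ y, ℓ (y, f y) ≤ ℓ (x, f x) := fun y =>
    le_of_tendsto (x := 𝓝[>] (f y))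
      ((ℓ.continuous.comp (Continuous.prodMk_right y)).tendsto (f y)
        |>.mono_left nhdsWithin_le_nhds)
      (eventually_nhdsWithin_of_forall fun t ht => (hℓ (y, t) ht).le)
  refine ⟨(-ℓ (0, 1))⁻¹ • ℓ.comp (ContinuousLinearMap.inl ℝ E ℝ), fun y => ?_⟩
  have h := hle y
  rw [hℓ_apply, hℓ_apply x] at h
  have hsub : ℓ (y - x, 0) = ℓ (y, 0) - ℓ (x, 0) := by
    rw [← map_sub, Prod.mk_sub_mk, sub_zero]
  rw [smul_apply, ContinuousLinearMap.comp_apply, ContinuousLinearMap.inl_apply, hsub,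
    smul_eq_mul, add_comm, ← le_sub_iff_add_le, inv_mul_le_iff₀ (by linarith)]
  nlinarith

/-- Evaluating the subgradient inequality at `2 u - x` bounds the affine minorant at `u`, taken at
`x`, below by `2 f u - f (2 u - x)`, which tends to `f x` as `u → x`. -/
theorem isLUB_range_add_subgradient [NormedSpace ℝ E] {f : E → ℝ} (hcont : Continuous f)
    {u : ℕ → E} (hu : DenseRange u) {φ : ℕ → E →L[ℝ] ℝ}
    (hφ : ∀ n y, f (u n) + φ n (y - u n) ≤ f y) (x : E) :
    IsLUB (range fun n => f (u n) + φ n (x - u n)) (f x) := by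
  refine ⟨forall_mem_range.2 fun n => hφ n x, fun b hb => ?_⟩
  by_contra! hbx
  have hopen : IsOpen {v | b < 2 * f v - f (2 • v - x)} :=
    isOpen_lt continuous_const (by fun_prop)
  obtain ⟨n, hn⟩ := hu.exists_mem_open hopen ⟨x, by simpa [two_smul, two_mul] using hbx⟩
  have h1 := hφ n (2 • u n - x)
  have h2 := hb ⟨n, rfl⟩
  rw [show 2 • u n - x - u n = -(x - u n) by rw [two_smul]; abel, map_neg] at h1
  simp only [mem_ofPred_eq] at hn
  linarith

theorem ConvexOn.exists_measurable_isLUB_inner_add [InnerProductSpace ℝ E]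
    [FiniteDimensional ℝ E] [MeasurableSpace E] [BorelSpace E] {f : E → ℝ}
    (hf : ConvexOn ℝ univ f) :
    ∃ (a : ℕ → E) (c : E → ℝ), Measurable c ∧
      ∀ x, IsLUB (range fun n => ⟪a n, x⟫ + c (a n)) (f x) := by
  have hcont : Continuous f := continuousOn_univ.1 (hf.continuousOn isOpen_univ)
  obtain ⟨u, hu⟩ := TopologicalSpace.exists_dense_seq E
  choose φ hφ using fun n => hf.exists_subgradient hcont (u n)
  set a : ℕ → E := fun n => (InnerProductSpace.toDual ℝ E).symm (φ n)
  have ha : ∀ n y, ⟪a n, y⟫ = φ n y := fun n y => InnerProductSpace.toDual_symm_apply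
  -- `c` is the negated Legendre transform of `f`, computed along the dense sequence `u`
  have hc : ∀ n, ⨅ k, (f (u k) - ⟪a n, u k⟫) = f (u n) - ⟪a n, u n⟫ := by
    refine fun n => IsGLB.ciInf_eq (IsLeast.isGLB ⟨⟨n, rfl⟩, forall_mem_range.2 fun k => ?_⟩)
    have := hφ n (u k)
    rw [map_sub, ← ha, ← ha] at this
    linarith
  refine ⟨a, fun y => ⨅ k, (f (u k) - ⟪y, u k⟫), Measurable.iInf fun k => by fun_prop,
    fun x => ?_⟩
  convert isLUB_range_add_subgradient hcont hu hφ x using 3 with n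
  beta_reduce
  rw [hc n, ← ha, inner_sub_right]
  ring

end ConvexAnalysis

section Integration

variable {Ω : Type*} [MeasurableSpace Ω] {μ : Measure Ω}

theorem integrable_partialSups {ℓ : ℕ → Ω → ℝ} (hℓ : ∀ n, Integrable (ℓ n) μ) (N : ℕ) :
    Integrable (partialSups ℓ N) μ := by
  induction N with
  | zero => simpa using hℓ 0
  | succ N ih => simpa [partialSups_succ] using ih.sup (hℓ (N + 1))

theorem tendsto_integral_partialSups_of_isLUB {ℓ : ℕ → Ω → ℝ} {f : Ω → ℝ}
    (hℓ : ∀ n, Integrable (ℓ n) μ) (hf : Integrable f μ)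
    (hlub : ∀ x, IsLUB (range fun n => ℓ n x) (f x)) :
    Tendsto (fun N => ∫ x, partialSups ℓ N x ∂μ) atTop (𝓝 (∫ x, f x ∂μ)) := by
  refine integral_tendsto_of_tendsto_of_monotone (integrable_partialSups hℓ) hf
    (ae_of_all _ fun x _ _ hNM => partialSups_monotone ℓ hNM x) (ae_of_all _ fun x => ?_)
  simp only [Pi.partialSups_apply]
  refine tendsto_atTop_isLUB (partialSups_monotone _) ?_
  rw [IsLUB, upperBounds_range_partialSups]
  exact hlub x

theorem exists_measurable_partialSups_eq {ℓ : ℕ → Ω → ℝ} (hℓ : ∀ n, Measurable (ℓ n)) (N : ℕ) :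
    ∃ i : Ω → ℕ, Measurable i ∧ (∀ x, i x ≤ N) ∧ ∀ x, partialSups ℓ N x = ℓ (i x) x := by
  classical
  have hex : ∀ x, ∃ n, n ≤ N ∧ partialSups ℓ N x = ℓ n x := fun x => by
    simpa only [Pi.partialSups_apply] using exists_partialSups_eq (fun n => ℓ n x) N
  refine ⟨fun x => Nat.find (hex x), measurable_find hex fun n => ?_,
    fun x => (Nat.find_spec (hex x)).1, fun x => (Nat.find_spec (hex x)).2⟩
  exact (MeasurableSet.const _).inter (measurableSet_eq_fun
    (Finset.measurable_sup' Finset.nonempty_Iic fun n _ => hℓ n) (hℓ n))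

theorem integrable_comp_of_forall_le [IsFiniteMeasure μ] {i : Ω → ℕ} (hi : Measurable i) {N : ℕ}
    (hiN : ∀ x, i x ≤ N) (h : ℕ → ℝ) : Integrable (fun x => h (i x)) μ :=
  .of_bound (measurable_from_nat.comp hi).aestronglyMeasurable (∑ n ∈ Finset.Iic N, ‖h n‖)
    (ae_of_all _ fun x => Finset.single_le_sum (f := fun n => ‖h n‖) (fun _ _ => norm_nonneg _)
      (Finset.mem_Iic.2 (hiN x)))

variable {E : Type*} [NormedAddCommGroup E] [InnerProductSpace ℝ E]

theorem integrable_inner_of_integrable_norm_sq {X Y : Ω → E} (hX : AEStronglyMeasurable X μ)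
    (hY : AEStronglyMeasurable Y μ) (hX2 : Integrable (fun ω => ‖X ω‖ ^ 2) μ)
    (hY2 : Integrable (fun ω => ‖Y ω‖ ^ 2) μ) : Integrable (fun ω => ⟪X ω, Y ω⟫) μ := by
  refine (hX2.add hY2).mono' (hX.inner hY) (ae_of_all _ fun ω => ?_)
  have := abs_real_inner_le_norm (X ω) (Y ω)
  rw [Real.norm_eq_abs, Pi.add_apply]
  nlinarith [sq_nonneg (‖X ω‖ - ‖Y ω‖), norm_nonneg (X ω), norm_nonneg (Y ω)]

theorem integral_norm_sub_sq {X Y : Ω → E} (hX : AEStronglyMeasurable X μ)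
    (hY : AEStronglyMeasurable Y μ) (hX2 : Integrable (fun ω => ‖X ω‖ ^ 2) μ)
    (hY2 : Integrable (fun ω => ‖Y ω‖ ^ 2) μ) :
    ∫ ω, ‖X ω - Y ω‖ ^ 2 ∂μ =
      ∫ ω, ‖X ω‖ ^ 2 ∂μ - 2 * ∫ ω, ⟪X ω, Y ω⟫ ∂μ + ∫ ω, ‖Y ω‖ ^ 2 ∂μ := by
  have hXY := integrable_inner_of_integrable_norm_sq hX hY hX2 hY2
  simp_rw [norm_sub_sq_real]
  rw [integral_add (f := fun ω => ‖X ω‖ ^ 2 - 2 * ⟪X ω, Y ω⟫) (hX2.sub (hXY.const_mul 2)) hY2,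
    integral_sub hX2 (hXY.const_mul 2), integral_const_mul]

theorem integrable_inner_add_const [MeasurableSpace E] [BorelSpace E] [SecondCountableTopology E]
    {μ : Measure E} [IsFiniteMeasure μ] (h2 : Integrable (fun x => ‖x‖ ^ 2) μ) (a : E) (b : ℝ) :
    Integrable (fun x => ⟪a, x⟫ + b) μ :=
  ((((memLp_two_iff_integrable_sq_norm aestronglyMeasurable_id).2 h2).integrable
    one_le_two).const_inner a).add (integrable_const b)

end Integration

section Wasserstein

variable {d : ℕ}

theorem W2sq_le_integral {μ ν : Measure (EuclideanSpace ℝ (Fin d))}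
    {π : Measure (EuclideanSpace ℝ (Fin d) × EuclideanSpace ℝ (Fin d))}
    (h1 : π.map Prod.fst = μ) (h2 : π.map Prod.snd = ν) :
    W2sq μ ν ≤ ∫ p, ‖p.1 - p.2‖ ^ 2 ∂π :=
  csInf_le ⟨0, by rintro r ⟨π, -, -, rfl⟩; positivity⟩ ⟨π, h1, h2, rfl⟩

theorem le_W2sq {μ ν : Measure (EuclideanSpace ℝ (Fin d))} [IsProbabilityMeasure μ]
    [IsProbabilityMeasure ν] {L : ℝ}
    (h : ∀ π : Measure (EuclideanSpace ℝ (Fin d) × EuclideanSpace ℝ (Fin d)),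
      π.map Prod.fst = μ → π.map Prod.snd = ν → L ≤ ∫ p, ‖p.1 - p.2‖ ^ 2 ∂π) :
    L ≤ W2sq μ ν := by
  refine le_csInf ⟨_, μ.prod ν, by simp, by simp, rfl⟩ ?_
  rintro r ⟨π, h1, h2, rfl⟩
  exact h π h1 h2

theorem W2sq_map_le (μ : Measure (EuclideanSpace ℝ (Fin d)))
    {g : EuclideanSpace ℝ (Fin d) → EuclideanSpace ℝ (Fin d)} (hg : Measurable g) :
    W2sq μ (μ.map g) ≤ ∫ x, ‖x - g x‖ ^ 2 ∂μ := by
  have hpair : Measurable fun x => (x, g x) := measurable_id.prodMk hg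
  calc W2sq μ (μ.map g) ≤ ∫ p, ‖p.1 - p.2‖ ^ 2 ∂(μ.map fun x => (x, g x)) :=
        W2sq_le_integral (by rw [Measure.map_map measurable_fst hpair]; exact Measure.map_id)
          (by rw [Measure.map_map measurable_snd hpair]; rfl)
    _ = ∫ x, ‖x - g x‖ ^ 2 ∂μ := integral_map hpair.aemeasurable (by fun_prop)

theorem le_W2sq_of_inner_le {ν ρ : Measure (EuclideanSpace ℝ (Fin d))}
    [IsProbabilityMeasure ν] [IsProbabilityMeasure ρ]
    (hν2 : Integrable (fun x => ‖x‖ ^ 2) ν) (hρ2 : Integrable (fun y => ‖y‖ ^ 2) ρ)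
    {φ ψ : EuclideanSpace ℝ (Fin d) → ℝ} (hφ : Integrable φ ν) (hψ : Integrable ψ ρ)
    (hφψ : ∀ᵐ y ∂ρ, ∀ x, ⟪x, y⟫ ≤ φ x + ψ y) :
    ∫ x, ‖x‖ ^ 2 ∂ν - 2 * (∫ x, φ x ∂ν + ∫ y, ψ y ∂ρ) + ∫ y, ‖y‖ ^ 2 ∂ρ ≤ W2sq ν ρ := by
  refine le_W2sq fun π h1 h2 => ?_
  subst h1 h2
  have hX2 : Integrable (fun p => ‖p.1‖ ^ 2) π := hν2.comp_measurable measurable_fst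
  have hY2 : Integrable (fun p => ‖p.2‖ ^ 2) π := hρ2.comp_measurable measurable_snd
  have hφπ : Integrable (fun p => φ p.1) π := hφ.comp_measurable measurable_fst
  have hψπ : Integrable (fun p => ψ p.2) π := hψ.comp_measurable measurable_snd
  have hle : ∫ p, ⟪p.1, p.2⟫ ∂π ≤ ∫ p, (φ p.1 + ψ p.2) ∂π :=
    integral_mono_ae (integrable_inner_of_integrable_norm_sq measurable_fst.aestronglyMeasurable
      measurable_snd.aestronglyMeasurable hX2 hY2) (hφπ.add hψπ) (by
        filter_upwards [ae_of_ae_map measurable_snd.aemeasurable hφψ] with p hp using hp p.1)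
  rw [integral_add hφπ hψπ] at hle
  rw [integral_norm_sub_sq measurable_fst.aestronglyMeasurable
      measurable_snd.aestronglyMeasurable hX2 hY2,
    integral_map measurable_fst.aemeasurable hν2.1, integral_map measurable_snd.aemeasurable hρ2.1,
    integral_map measurable_fst.aemeasurable hφ.1, integral_map measurable_snd.aemeasurable hψ.1]
  linarith

end Wasserstein

section ConvexOrder

variable {d : ℕ} {μ ν : Measure (EuclideanSpace ℝ (Fin d))}
  [IsProbabilityMeasure μ] [IsProbabilityMeasure ν]

theorem integral_le_integral_of_W2sq_sub_le
    (hμ2 : Integrable (fun x => ‖x‖ ^ 2) μ) (hν2 : Integrable (fun x => ‖x‖ ^ 2) ν)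
    (hW : ∀ ρ : Measure (EuclideanSpace ℝ (Fin d)), IsProbabilityMeasure ρ →
        Integrable (fun x => ‖x‖ ^ 2) ρ →
        W2sq ν ρ - W2sq μ ρ ≤ ∫ x, ‖x‖ ^ 2 ∂ν - ∫ x, ‖x‖ ^ 2 ∂μ)
    {g : EuclideanSpace ℝ (Fin d) → EuclideanSpace ℝ (Fin d)} (hg : Measurable g)
    (hg_range : (range g).Countable) (hg2 : Integrable (fun x => ‖g x‖ ^ 2) μ)
    {c : EuclideanSpace ℝ (Fin d) → ℝ} (hc : Measurable c)
    (hcg : Integrable (fun x => c (g x)) μ)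
    {F : EuclideanSpace ℝ (Fin d) → ℝ} (hF : Integrable F ν)
    (hF_le : ∀ x x', ⟪g x', x⟫ + c (g x') ≤ F x) (hF_eq : ∀ x, F x = ⟪g x, x⟫ + c (g x)) :
    ∫ x, F x ∂μ ≤ ∫ x, F x ∂ν := by
  set ρ := μ.map g
  have : IsProbabilityMeasure ρ := Measure.isProbabilityMeasure_map hg.aemeasurable
  have hsq : AEStronglyMeasurable (fun y : EuclideanSpace ℝ (Fin d) => ‖y‖ ^ 2) ρ := by
    fun_prop
  have hρ2 : Integrable (fun y => ‖y‖ ^ 2) ρ :=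
    (integrable_map_measure hsq hg.aemeasurable).2 hg2
  have hcρ : Integrable c ρ :=
    (integrable_map_measure hc.aestronglyMeasurable hg.aemeasurable).2 hcg
  have hinner : Integrable (fun x => ⟪x, g x⟫) μ :=
    integrable_inner_of_integrable_norm_sq aestronglyMeasurable_id hg.aestronglyMeasurable hμ2 hg2
  have hupper : W2sq μ ρ ≤ ∫ x, ‖x‖ ^ 2 ∂μ - 2 * ∫ x, ⟪x, g x⟫ ∂μ + ∫ x, ‖g x‖ ^ 2 ∂μ :=
    (W2sq_map_le μ hg).trans_eq
      (integral_norm_sub_sq aestronglyMeasurable_id hg.aestronglyMeasurable hμ2 hg2)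
  have hyoung : ∀ᵐ y ∂ρ, ∀ x, ⟪x, y⟫ ≤ F x + -c y := by
    filter_upwards [ae_map_mem_range g hg_range.measurableSet μ] with y ⟨x', hx'⟩ x
    have := hF_le x x'
    rw [hx', real_inner_comm] at this
    linarith
  have hlower := le_W2sq_of_inner_le hν2 hρ2 hF (ψ := fun y => -c y) hcρ.neg hyoung
  rw [integral_neg, integral_map hg.aemeasurable hsq, integral_map hg.aemeasurable hcρ.1] at hlower
  have hFμ : ∫ x, F x ∂μ = ∫ x, ⟪x, g x⟫ ∂μ + ∫ x, c (g x) ∂μ := by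
    simp_rw [hF_eq, real_inner_comm _ (g _)]
    exact integral_add hinner hcg
  linarith [hW ρ this hρ2]

theorem integral_partialSups_le_of_W2sq_sub_le
    (hμ2 : Integrable (fun x => ‖x‖ ^ 2) μ) (hν2 : Integrable (fun x => ‖x‖ ^ 2) ν)
    (hW : ∀ ρ : Measure (EuclideanSpace ℝ (Fin d)), IsProbabilityMeasure ρ →
        Integrable (fun x => ‖x‖ ^ 2) ρ →
        W2sq ν ρ - W2sq μ ρ ≤ ∫ x, ‖x‖ ^ 2 ∂ν - ∫ x, ‖x‖ ^ 2 ∂μ)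
    (a : ℕ → EuclideanSpace ℝ (Fin d)) {c : EuclideanSpace ℝ (Fin d) → ℝ} (hc : Measurable c)
    (N : ℕ) :
    ∫ x, partialSups (fun n x => ⟪a n, x⟫ + c (a n)) N x ∂μ ≤
      ∫ x, partialSups (fun n x => ⟪a n, x⟫ + c (a n)) N x ∂ν := by
  obtain ⟨i, hi, hiN, hi_eq⟩ := exists_measurable_partialSups_eq
    (ℓ := fun n x => ⟪a n, x⟫ + c (a n)) (fun n => by fun_prop) N
  exact integral_le_integral_of_W2sq_sub_le hμ2 hν2 hW (measurable_from_nat.comp hi)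
    ((countable_range a).mono (range_comp_subset_range i a))
    (integrable_comp_of_forall_le hi hiN fun n => ‖a n‖ ^ 2) hc
    (integrable_comp_of_forall_le hi hiN fun n => c (a n))
    (integrable_partialSups (fun n => integrable_inner_add_const hν2 (a n) (c (a n))) N)
    (fun x x' => le_partialSups_of_le (fun n x => ⟪a n, x⟫ + c (a n)) (hiN x') x) hi_eq

end ConvexOrder

theorem wasserstein_ineq_implies_convex_order {d : ℕ}
    (μ ν : Measure (EuclideanSpace ℝ (Fin d)))
    [IsProbabilityMeasure μ] [IsProbabilityMeasure ν]
    (hμ2 : Integrable (fun x => ‖x‖ ^ 2) μ)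
    (hν2 : Integrable (fun x => ‖x‖ ^ 2) ν)
    (hW : ∀ ρ : Measure (EuclideanSpace ℝ (Fin d)), IsProbabilityMeasure ρ →
        Integrable (fun x => ‖x‖ ^ 2) ρ →
        W2sq ν ρ - W2sq μ ρ ≤ ∫ x, ‖x‖ ^ 2 ∂ν - ∫ x, ‖x‖ ^ 2 ∂μ) :
    ∀ f : EuclideanSpace ℝ (Fin d) → ℝ, ConvexOn ℝ Set.univ f →
        Integrable f μ → Integrable f ν → ∫ x, f x ∂μ ≤ ∫ x, f x ∂ν := by
  intro f hf hfμ hfν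
  obtain ⟨a, c, hc, hlub⟩ := hf.exists_measurable_isLUB_inner_add
  exact le_of_tendsto_of_tendsto'
    (tendsto_integral_partialSups_of_isLUB
      (fun n => integrable_inner_add_const hμ2 (a n) (c (a n))) hfμ hlub)
    (tendsto_integral_partialSups_of_isLUB
      (fun n => integrable_inner_add_const hν2 (a n) (c (a n))) hfν hlub)
    (integral_partialSups_le_of_W2sq_sub_le hμ2 hν2 hW a hc)
end

section
/- Let μ and ν be Borel probability measures on ℝ^d with finite second moment. If ∫ f dμ ≤ ∫ f dν holds for every convex function f : ℝ^d → ℝ of at most linear growth (i.e. there exists a constant C with |f(x)| ≤ C(1 + |x|) for all x), then ∫ f dμ ≤ ∫ f dν holds for every convex function f : ℝ^d → ℝ that is integrable with respect to both μ and ν; in other words, to verify the convex order μ ≤_c ν it suffices to test against convex functions of at most linear growth. -/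
/-!
Approximate a convex `f` from below by its Pasch–Hausdorff envelopes
`f_L x = ⨅ y, f y + L * ‖x - y‖`. Since a finite-dimensional convex function is bounded
below by `-a - b * ‖x‖`, for `L ≥ b` the envelope `f_L` is finite, convex, `L`-Lipschitz and of
linear growth, so it is an admissible test function, and `∫ f_L dμ ≤ ∫ f_L dν ≤ ∫ f dν`. As
`L → ∞` the envelopes increase to `f` pointwise (`f` is continuous), and monotone convergence
gives `∫ f_L dμ → ∫ f dμ`. Finite second moments make all linear-growth functions integrable.
-/

open MeasureTheory Filter Topology

variable {E : Type*} [NormedAddCommGroup E]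

theorem ConvexOn.neg_sub_mul_norm_le [NormedSpace ℝ E] {f : E → ℝ} {M : ℝ}
    (hf : ConvexOn ℝ Set.univ f) (hM : ∀ y, ‖y‖ ≤ 1 → |f y| ≤ M) (y : E) :
    -M - 2 * M * ‖y‖ ≤ f y := by
  have hM0 : 0 ≤ M := (abs_nonneg _).trans (hM 0 (by simp))
  rcases le_or_gt ‖y‖ 1 with hy | hy
  · nlinarith [neg_abs_le (f y), hM y hy, norm_nonneg y]
  set t := ‖y‖
  have ht : 0 < t := one_pos.trans hy
  have hu : |f (t⁻¹ • y)| ≤ M :=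
    hM _ (by rw [norm_smul, norm_inv, norm_norm, inv_mul_cancel₀ ht.ne'])
  have hf0 : |f 0| ≤ M := hM 0 (by simp)
  have hseg : f (t⁻¹ • y) ≤ (1 - t⁻¹) * f 0 + t⁻¹ * f y := by
    simpa using hf.2 (Set.mem_univ 0) (Set.mem_univ y)
      (sub_nonneg.2 (inv_le_one_of_one_le₀ hy.le)) (inv_nonneg.2 ht.le) (sub_add_cancel 1 t⁻¹)
  have hscaled : t * f (t⁻¹ • y) ≤ (t - 1) * f 0 + f y := by
    have := mul_le_mul_of_nonneg_left hseg ht.le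
    rwa [mul_add, ← mul_assoc, ← mul_assoc, mul_sub, mul_one, mul_inv_cancel₀ ht.ne',
      one_mul] at this
  nlinarith [neg_abs_le (f (t⁻¹ • y)), le_abs_self (f 0)]

theorem ConvexOn.exists_neg_sub_mul_norm_le [NormedSpace ℝ E] [FiniteDimensional ℝ E]
    {f : E → ℝ} (hf : ConvexOn ℝ Set.univ f) : ∃ a b : ℝ, 0 ≤ b ∧ ∀ y, -a - b * ‖y‖ ≤ f y := by
  obtain ⟨M, hM⟩ := (isCompact_closedBall (0 : E) 1).exists_bound_of_continuousOn
    hf.locallyLipschitz.continuous.continuousOn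
  have hM0 : 0 ≤ M := (norm_nonneg _).trans (hM 0 (by simp))
  refine ⟨M, 2 * M, by positivity, hf.neg_sub_mul_norm_le fun y hy => ?_⟩
  simpa using hM y (by simpa using hy)

/-- The Pasch–Hausdorff envelope: the largest `L`-Lipschitz minorant of `f` when it is finite. -/
noncomputable def lipschitzEnvelope (f : E → ℝ) (L : ℝ) (x : E) : ℝ :=
  ⨅ y, f y + L * ‖x - y‖

section LipschitzEnvelope

variable {f : E → ℝ} {a b L : ℝ}

theorem sub_add_mul_norm_sub_le (hlow : ∀ y, -a - b * ‖y‖ ≤ f y) (hb : 0 ≤ b) (x y : E) :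
    -a - b * ‖x‖ + (L - b) * ‖x - y‖ ≤ f y + L * ‖x - y‖ := by
  have hy : ‖y‖ ≤ ‖x‖ + ‖x - y‖ := by simpa using norm_sub_le x (x - y)
  nlinarith [hlow y, mul_le_mul_of_nonneg_left hy hb]

theorem bddBelow_range_add_mul_norm_sub (hlow : ∀ y, -a - b * ‖y‖ ≤ f y) (hb : 0 ≤ b)
    (hbL : b ≤ L) (x : E) : BddBelow (Set.range fun y => f y + L * ‖x - y‖) :=
  ⟨-a - b * ‖x‖, by
    rintro _ ⟨y, rfl⟩
    nlinarith [sub_add_mul_norm_sub_le (L := L) hlow hb x y, norm_nonneg (x - y)]⟩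

theorem le_lipschitzEnvelope (hlow : ∀ y, -a - b * ‖y‖ ≤ f y) (hb : 0 ≤ b) (hbL : b ≤ L)
    (x : E) : -a - b * ‖x‖ ≤ lipschitzEnvelope f L x :=
  le_ciInf fun y => by
    nlinarith [sub_add_mul_norm_sub_le (L := L) hlow hb x y, norm_nonneg (x - y)]

theorem lipschitzEnvelope_le_add_mul_norm_sub (hlow : ∀ y, -a - b * ‖y‖ ≤ f y) (hb : 0 ≤ b)
    (hbL : b ≤ L) (x y : E) : lipschitzEnvelope f L x ≤ f y + L * ‖x - y‖ :=
  ciInf_le (bddBelow_range_add_mul_norm_sub hlow hb hbL x) y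

theorem lipschitzEnvelope_le (hlow : ∀ y, -a - b * ‖y‖ ≤ f y) (hb : 0 ≤ b) (hbL : b ≤ L)
    (x : E) : lipschitzEnvelope f L x ≤ f x := by
  simpa using lipschitzEnvelope_le_add_mul_norm_sub hlow hb hbL x x

theorem abs_lipschitzEnvelope_le (hlow : ∀ y, -a - b * ‖y‖ ≤ f y) (hb : 0 ≤ b) (hbL : b ≤ L)
    (x : E) : |lipschitzEnvelope f L x| ≤ (|a| + |f 0| + b + L) * (1 + ‖x‖) := by
  have hlower := le_lipschitzEnvelope hlow hb hbL x
  have hupper := lipschitzEnvelope_le_add_mul_norm_sub hlow hb hbL x 0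
  rw [sub_zero] at hupper
  rw [abs_le]
  constructor <;> nlinarith [norm_nonneg x, abs_nonneg a, abs_nonneg (f 0), le_abs_self a,
    le_abs_self (f 0), mul_nonneg hb (norm_nonneg x), mul_nonneg (hb.trans hbL) (norm_nonneg x)]

theorem lipschitzEnvelope_mono (hlow : ∀ y, -a - b * ‖y‖ ≤ f y) (hb : 0 ≤ b) (hbL : b ≤ L)
    {L' : ℝ} (hLL' : L ≤ L') (x : E) : lipschitzEnvelope f L x ≤ lipschitzEnvelope f L' x :=
  ciInf_mono (bddBelow_range_add_mul_norm_sub hlow hb hbL x) fun _ => by gcongr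

theorem lipschitzWith_lipschitzEnvelope (hlow : ∀ y, -a - b * ‖y‖ ≤ f y) (hb : 0 ≤ b)
    (hbL : b ≤ L) : LipschitzWith (Real.toNNReal L) (lipschitzEnvelope f L) :=
  LipschitzWith.of_le_add_mul' L fun x x' => by
    rw [← sub_le_iff_le_add]
    refine le_ciInf fun y => ?_
    have htri : ‖x - y‖ ≤ dist x x' + ‖x' - y‖ := by
      rw [dist_eq_norm]; simpa using norm_add_le (x - x') (x' - y)
    nlinarith [lipschitzEnvelope_le_add_mul_norm_sub hlow hb hbL x y,
      mul_le_mul_of_nonneg_left htri (hb.trans hbL)]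

theorem convexOn_lipschitzEnvelope [NormedSpace ℝ E] (hf : ConvexOn ℝ Set.univ f)
    (hlow : ∀ y, -a - b * ‖y‖ ≤ f y) (hb : 0 ≤ b) (hbL : b ≤ L) :
    ConvexOn ℝ Set.univ (lipschitzEnvelope f L) := by
  refine ⟨convex_univ, fun x _ z _ s t hs ht hst => le_of_forall_pos_le_add fun ε hε => ?_⟩
  obtain ⟨y₁, hy₁⟩ := exists_lt_of_ciInf_lt (lt_add_of_pos_right (lipschitzEnvelope f L x) hε)
  obtain ⟨y₂, hy₂⟩ := exists_lt_of_ciInf_lt (lt_add_of_pos_right (lipschitzEnvelope f L z) hε)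
  have hnorm : ‖(s • x + t • z) - (s • y₁ + t • y₂)‖ ≤ s * ‖x - y₁‖ + t * ‖z - y₂‖ := by
    calc ‖(s • x + t • z) - (s • y₁ + t • y₂)‖ = ‖s • (x - y₁) + t • (z - y₂)‖ := by
          rw [smul_sub, smul_sub, add_sub_add_comm]
      _ ≤ s * ‖x - y₁‖ + t * ‖z - y₂‖ := by
          simpa [norm_smul, abs_of_nonneg hs, abs_of_nonneg ht] using
            norm_add_le (s • (x - y₁)) (t • (z - y₂))
  calc _ ≤ f (s • y₁ + t • y₂) + L * ‖(s • x + t • z) - (s • y₁ + t • y₂)‖ :=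
        lipschitzEnvelope_le_add_mul_norm_sub hlow hb hbL _ _
    _ ≤ s * f y₁ + t * f y₂ + L * (s * ‖x - y₁‖ + t * ‖z - y₂‖) := by
        gcongr
        · exact hf.2 trivial trivial hs ht hst
        · exact hb.trans hbL
    _ = s * (f y₁ + L * ‖x - y₁‖) + t * (f y₂ + L * ‖z - y₂‖) := by ring
    _ ≤ s * (lipschitzEnvelope f L x + ε) + t * (lipschitzEnvelope f L z + ε) := by
        gcongr
    _ = s • lipschitzEnvelope f L x + t • lipschitzEnvelope f L z + ε := by
        rw [smul_eq_mul, smul_eq_mul]; linear_combination ε * hst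

theorem tendsto_lipschitzEnvelope_atTop (hlow : ∀ y, -a - b * ‖y‖ ≤ f y) (hb : 0 ≤ b) {x : E}
    (hfx : LowerSemicontinuousAt f x) :
    Tendsto (fun L => lipschitzEnvelope f L x) atTop (𝓝 (f x)) := by
  refine tendsto_order.2 ⟨fun c hc => ?_, fun c hc => ?_⟩
  · obtain ⟨c', hcc', hc'⟩ := exists_between hc
    obtain ⟨δ, hδ, hball⟩ := Metric.eventually_nhds_iff.1 (hfx c' hc')
    filter_upwards [eventually_ge_atTop (b + (c' + a + b * ‖x‖) / δ), eventually_ge_atTop b]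
      with L hL hbL
    refine hcc'.trans_le (le_ciInf fun y => ?_)
    rcases lt_or_ge (dist y x) δ with hyx | hyx
    · nlinarith [hball hyx, norm_nonneg (x - y)]
    · -- far from `x`, the penalty `(L - b) * ‖x - y‖` beats the linear lower bound
      rw [dist_comm, dist_eq_norm] at hyx
      have hpen : c' + a + b * ‖x‖ ≤ (L - b) * ‖x - y‖ := by
        calc c' + a + b * ‖x‖ = (c' + a + b * ‖x‖) / δ * δ := by field_simp
          _ ≤ (L - b) * ‖x - y‖ := by
            gcongr
            linarith
      linarith [sub_add_mul_norm_sub_le (L := L) hlow hb x y]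
  · filter_upwards [eventually_ge_atTop b] with L hbL
    exact (lipschitzEnvelope_le hlow hb hbL x).trans_lt hc

end LipschitzEnvelope

theorem integrable_of_abs_le_mul_one_add_norm [MeasurableSpace E] {μ : Measure E}
    [IsFiniteMeasure μ] (hμ : Integrable (fun x => ‖x‖ ^ 2) μ) {g : E → ℝ}
    (hg : AEStronglyMeasurable g μ) {C : ℝ} (hC : ∀ x, |g x| ≤ C * (1 + ‖x‖)) :
    Integrable g μ := by
  have hC0 : 0 ≤ C := by simpa using (abs_nonneg _).trans (hC 0)
  refine (((integrable_const 2).add hμ).const_mul C).mono' hg (.of_forall fun x => ?_)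
  rw [Real.norm_eq_abs]
  refine (hC x).trans (mul_le_mul_of_nonneg_left ?_ hC0)
  simp only [Pi.add_apply]
  nlinarith [sq_nonneg (‖x‖ - 1)]

theorem convex_order_of_linear_growth_tests {d : ℕ}
    (μ ν : Measure (EuclideanSpace ℝ (Fin d)))
    [IsProbabilityMeasure μ] [IsProbabilityMeasure ν]
    (hμ2 : Integrable (fun x => ‖x‖ ^ 2) μ)
    (hν2 : Integrable (fun x => ‖x‖ ^ 2) ν)
    (h : ∀ f : EuclideanSpace ℝ (Fin d) → ℝ, ConvexOn ℝ Set.univ f →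
        (∃ C : ℝ, ∀ x, |f x| ≤ C * (1 + ‖x‖)) →
        ∫ x, f x ∂μ ≤ ∫ x, f x ∂ν) :
    ∀ f : EuclideanSpace ℝ (Fin d) → ℝ, ConvexOn ℝ Set.univ f →
        Integrable f μ → Integrable f ν → ∫ x, f x ∂μ ≤ ∫ x, f x ∂ν := by
  intro f hf hfμ hfν
  obtain ⟨a, b, hb, hlow⟩ := hf.exists_neg_sub_mul_norm_le
  have hbL (n : ℕ) : b ≤ b + n := le_add_of_nonneg_right n.cast_nonneg
  set g : ℕ → EuclideanSpace ℝ (Fin d) → ℝ := fun n => lipschitzEnvelope f (b + n)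
  have hg_growth (n : ℕ) (x) : |g n x| ≤ (|a| + |f 0| + b + (b + n)) * (1 + ‖x‖) :=
    abs_lipschitzEnvelope_le hlow hb (hbL n) x
  have hg_int (n : ℕ) {κ : Measure (EuclideanSpace ℝ (Fin d))} [IsFiniteMeasure κ]
      (hκ : Integrable (fun x => ‖x‖ ^ 2) κ) : Integrable (g n) κ :=
    integrable_of_abs_le_mul_one_add_norm hκ
      (lipschitzWith_lipschitzEnvelope hlow hb (hbL n)).continuous.aestronglyMeasurable
      (hg_growth n)
  have hg_le (n : ℕ) : ∫ x, g n x ∂μ ≤ ∫ x, f x ∂ν :=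
    (h (g n) (convexOn_lipschitzEnvelope hf hlow hb (hbL n)) ⟨_, hg_growth n⟩).trans
      (integral_mono (hg_int n hν2) hfν (lipschitzEnvelope_le hlow hb (hbL n)))
  have hg_tendsto : Tendsto (fun n => ∫ x, g n x ∂μ) atTop (𝓝 (∫ x, f x ∂μ)) :=
    integral_tendsto_of_tendsto_of_monotone (fun n => hg_int n hμ2) hfμ
      (.of_forall fun x m n hmn => lipschitzEnvelope_mono hlow hb (hbL m) (by gcongr) x)
      (.of_forall fun x => (tendsto_lipschitzEnvelope_atTop hlow hb
        hf.locallyLipschitz.continuous.continuousAt.lowerSemicontinuousAt).comp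
        (tendsto_atTop_add_const_left _ b tendsto_natCast_atTop_atTop))
  exact le_of_tendsto' hg_tendsto hg_le
end
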